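/- arXiv:math/0406085 — 2 statements merged into one kernel-verified Lean document; each statement's English description precedes it below -/
import Mathlib

section
/- Let F be a nonzero polynomial in n variables over a finite field K of total degree at most d with d < #K. If a point a is chosen uniformly at random from K^n, the probability that F(a) = 0 is at most d / #K. -/
open MvPolynomial Finset

theorem card_zeroLocus_div_card_pow_le_totalDegree_div_card {K : Type*} [Field K] [Fintype K]
    {n : ℕ} {F : MvPolynomial (Fin n) K} (hF : F ≠ 0) :
    (Nat.card {a : Fin n → K // eval a F = 0} : ℝ) / (Fintype.card K : ℝ) ^ n
      ≤ F.totalDegree / (Fintype.card K : ℝ) := by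
  classical
  have h := schwartz_zippel_totalDegree hF (univ : Finset K)
  rw [Fintype.piFinset_univ, card_univ] at h
  rw [Nat.card_eq_fintype_card, Fintype.card_subtype]
  have h' := (NNRat.cast_le (K := ℝ)).mpr h
  push_cast at h'
  exact h'

theorem stmt1_general (K : Type*) [Field K] [Fintype K] (n d : ℕ)
    (F : MvPolynomial (Fin n) K) (hF : F ≠ 0) (hdeg : F.totalDegree ≤ d) :
    (Nat.card {a : Fin n → K // MvPolynomial.eval a F = 0} : ℝ) / (Fintype.card K : ℝ) ^ n
      ≤ (d : ℝ) / (Fintype.card K : ℝ) :=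
  (card_zeroLocus_div_card_pow_le_totalDegree_div_card hF).trans
    (by gcongr)

/-- Probability form of the Zippel–Schwartz lemma over a finite field. -/
theorem stmt1 (K : Type*) [Field K] [Fintype K] (n d : ℕ)
    (F : MvPolynomial (Fin n) K) (hF : F ≠ 0) (hdeg : F.totalDegree ≤ d)
    (hd : d < Fintype.card K) :
    (Nat.card {a : Fin n → K // MvPolynomial.eval a F = 0} : ℝ) / (Fintype.card K : ℝ) ^ n
      ≤ (d : ℝ) / (Fintype.card K : ℝ) :=
  stmt1_general K n d F hF hdeg
end

section
/- Let k be an algebraically closed field, V ⊆ A^n an affine variety, and suppose q ∈ k[Z_1,...,Z_{m+1}] is monic in Z_{m+1} with q(Z_1(x),...,Z_{m+1}(x)) = 0 on V, and for each coordinate X_i there is v_i ∈ k[Z_1,...,Z_{m+1}] with v_i(Z(x)) − X_i·(∂q/∂Z_{m+1})(Z(x)) = 0 for all x ∈ V. Let π̃: V → A^{m+1} be given by x ↦ (Z_1(x),...,Z_{m+1}(x)), let W be the zero set of q, and let Ṽ = {x ∈ V : (∂q/∂Z_{m+1})(Z(x)) = 0} and W̃ = {z ∈ W : (∂q/∂Z_{m+1})(z)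 = 0}. Then π̃ restricted to V \ Ṽ is injective into W \ W̃, with inverse given by z ↦ (v_1(z)/q_0(z), ..., v_n(z)/q_0(z)) where q_0 = ∂q/∂Z_{m+1}. -/
/-- A variety admitting a rational parametrization by the zeros of `q` projects
injectively (away from the discriminant locus) onto the hypersurface `{q = 0}`,
with inverse `z ↦ (v_1(z)/q_0(z), …, v_n(z)/q_0(z))`. -/
theorem stmt14 (k : Type*) [Field k] (n m : ℕ) (V : Set (Fin n → k))
    (M : Fin (m + 1) → Fin n → k)
    (q : MvPolynomial (Fin (m + 1)) k)
    (v : Fin n → MvPolynomial (Fin (m + 1)) k)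
    (Z : (Fin n → k) → Fin (m + 1) → k)
    (hZ : ∀ x j, Z x j = ∑ i, M j i * x i)
    (hq : ∀ x ∈ V, MvPolynomial.eval (Z x) q = 0)
    (hv : ∀ x ∈ V, ∀ i, MvPolynomial.eval (Z x) (v i)
        - x i * MvPolynomial.eval (Z x) (MvPolynomial.pderiv (Fin.last m) q) = 0) :
    (∀ x ∈ V, ∀ x' ∈ V,
        MvPolynomial.eval (Z x) (MvPolynomial.pderiv (Fin.last m) q) ≠ 0 →
        MvPolynomial.eval (Z x') (MvPolynomial.pderiv (Fin.last m) q) ≠ 0 →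
        Z x = Z x' → x = x') ∧
      (∀ x ∈ V, MvPolynomial.eval (Z x) (MvPolynomial.pderiv (Fin.last m) q) ≠ 0 →
        ∀ i, x i = MvPolynomial.eval (Z x) (v i)
          / MvPolynomial.eval (Z x) (MvPolynomial.pderiv (Fin.last m) q)) := by
  have key : ∀ x ∈ V, MvPolynomial.eval (Z x) (MvPolynomial.pderiv (Fin.last m) q) ≠ 0 →
      ∀ i, x i = MvPolynomial.eval (Z x) (v i)
        / MvPolynomial.eval (Z x) (MvPolynomial.pderiv (Fin.last m) q) := by
    intro x hx h0 i
    have := hv x hx i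
    rw [eq_div_iff h0]
    linear_combination -this
  refine ⟨fun x hx x' hx' h0 h0' hZZ => ?_, key⟩
  funext i
  rw [key x hx h0 i, key x' hx' h0' i, hZZ]
end
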